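/- arXiv:1703.04963 — 5 statements merged into one kernel-verified Lean document; each statement's English description precedes it below -/
import Mathlib

section
/- Let r ≥ 1, let E be a finite set, and let v : E → ℝ^r be a family of vectors. For any tuples λ = (λ_1, …, λ_r) ∈ E^r and μ = (μ_1, …, μ_r) ∈ E^r, the Grassmann–Plücker relation holds: det(v_{λ_1}, …, v_{λ_r}) · det(v_{μ_1}, …, v_{μ_r}) = Σ_{s=1}^{r} det(v_{μ_s}, v_{λ_2}, …, v_{λ_r}) · det(v_{μ_1}, …, v_{μ_{s-1}}, v_{λ_1}, v_{μ_{s+1}}, …, v_{μ_r}). -/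
/-!
Expanding `w` in the rows `b₁, …, b_r` of `B` by Cramer's rule, `det B • w = ∑ₛ det(B[s := w]) • bₛ`,
which holds without any invertibility assumption. Applying the linear form `x ↦ det(A[z := x])` to
both sides gives the relation.
-/

open Matrix

namespace Matrix

theorem of_comp_update {n E α : Type*} [DecidableEq n] (v : E → n → α) (f : n → E)
    (z : n) (e : E) :
    of (fun i => v (Function.update f z e i)) = (of fun i => v (f i)).updateRow z (v e) := by
  ext i j
  by_cases h : i = z <;> simp [updateRow_apply, Function.update_apply, h]

variable {n R : Type*} [Fintype n] [DecidableEq n] [CommRing R]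

theorem sum_det_updateRow_smul_row (B : Matrix n n R) (w : n → R) :
    ∑ s, (B.updateRow s w).det • B s = B.det • w := by
  have h := mulVec_cramer Bᵀ w
  rw [det_transpose, ← vecMul_transpose, transpose_transpose, vecMul_eq_sum] at h
  simpa only [cramer_transpose_apply, op_smul_eq_smul] using h

theorem det_updateRow_mul_det_eq_sum (A B : Matrix n n R) (z : n) (w : n → R) :
    (A.updateRow z w).det * B.det = ∑ s, (A.updateRow z (B s)).det * (B.updateRow s w).det := by
  let φ : (n → R) →ₗ[R] R :=
    (detRowAlternating : (n → R) [⋀^n]→ₗ[R] R).toMultilinearMap.toLinearMap A z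
  have hφ (x : n → R) : φ x = (A.updateRow z x).det := rfl
  calc (A.updateRow z w).det * B.det = φ (B.det • w) := by rw [map_smul, hφ, smul_eq_mul, mul_comm]
    _ = φ (∑ s, (B.updateRow s w).det • B s) := by rw [sum_det_updateRow_smul_row]
    _ = _ := by simp_rw [map_sum, map_smul, hφ, smul_eq_mul, mul_comm]

end Matrix

theorem grassmann_plucker_general (r : ℕ) (hr : 1 ≤ r) (E : Type*)
    (v : E → Fin r → ℝ) (lam mu : Fin r → E) :
    Matrix.det (Matrix.of fun i => v (lam i)) * Matrix.det (Matrix.of fun i => v (mu i)) =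
      ∑ s : Fin r,
        Matrix.det (Matrix.of fun i => v (Function.update lam ⟨0, hr⟩ (mu s) i)) *
          Matrix.det (Matrix.of fun i => v (Function.update mu s (lam ⟨0, hr⟩) i)) := by
  simp only [of_comp_update]
  conv_lhs => rw [← updateRow_eq_self (of fun i => v (lam i)) ⟨0, hr⟩]
  exact det_updateRow_mul_det_eq_sum _ _ _ _

/-- **Grassmann–Plücker relation.** For a family `v : E → ℝ^r` of vectors and tuples
`lam, mu : Fin r → E`,
`det(v_{λ₁},…,v_{λ_r}) · det(v_{μ₁},…,v_{μ_r})
  = Σ_s det(v_{μ_s},v_{λ₂},…,v_{λ_r}) · det(v_{μ₁},…,v_{λ₁},…,v_{μ_r})`. -/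
theorem grassmann_plucker (r : ℕ) (hr : 1 ≤ r) (E : Type*) [Fintype E]
    (v : E → Fin r → ℝ) (lam mu : Fin r → E) :
    Matrix.det (Matrix.of fun i => v (lam i)) * Matrix.det (Matrix.of fun i => v (mu i)) =
      ∑ s : Fin r,
        Matrix.det (Matrix.of fun i => v (Function.update lam ⟨0, hr⟩ (mu s) i)) *
          Matrix.det (Matrix.of fun i => v (Function.update mu s (lam ⟨0, hr⟩) i)) :=
  grassmann_plucker_general r hr E v lam mu
end

section
/- Fix an integer k ≥ 1. Let p_1, …, p_{k+2} be points in ℝ² with coordinates p_i = (x_i, y_i) and x_1 < x_2 < … < x_{k+1} (x_{k+2} arbitrary). Let L be the Lagrange interpolation polynomial of (x_i, y_i), i = 1, …, k+1, and let f : ℝ² → ℝ^{k+2} be the map f(x, y) = (1, x, x², …, x^k, y). Then sign(y_{k+2} − L(x_{k+2})) = sign(det(f(p_1), …, f(p_{k+2}))), where the determinant is that of the (k+2)×(k+2) matrix whose i-th row is f(p_i). -/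
/-!
Subtracting `∑ⱼ L.coeff j • (column j)` from the last column turns its entries `yᵢ` into
`yᵢ - L(xᵢ)`, which vanish at the `k + 1` interpolation nodes. Expanding along that column, the
determinant is `(y_{k+2} - L(x_{k+2}))` times the Vandermonde determinant of `x₁ < ⋯ < x_{k+1}`,
and the latter is positive.
-/

open Polynomial

namespace Matrix

variable {R : Type*} [CommRing R]

theorem det_updateCol_self_add_sum_smul {n : Type*} [Fintype n] [DecidableEq n]
    (A : Matrix n n R) (j : n) (c : n → R) (hc : c j = 0) :
    (A.updateCol j fun k ↦ A k j + ∑ i, c i • A k i).det = A.det := by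
  calc (A.updateCol j fun k ↦ A k j + ∑ i, c i • A k i).det
      = (A.updateCol j fun k ↦ A k j).det + (A.updateCol j fun k ↦ ∑ i, c i • A k i).det :=
        det_updateCol_add A j _ _
    _ = A.det := by rw [updateCol_eq_self, det_updateCol_sum, hc, zero_smul, add_zero]

theorem det_eq_mul_det_submatrix_castSucc {n : ℕ} (A : Matrix (Fin (n + 1)) (Fin (n + 1)) R)
    (hA : ∀ i : Fin n, A i.castSucc (Fin.last n) = 0) :
    A.det = A (Fin.last n) (Fin.last n) * (A.submatrix Fin.castSucc Fin.castSucc).det := by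
  rw [det_succ_column A (Fin.last n), Fin.sum_univ_castSucc]
  simp [hA, Even.neg_one_pow ⟨n, rfl⟩]

theorem det_vandermonde_augmented {n : ℕ} (x y : Fin (n + 1) → R) (P : R[X])
    (hP : P.degree < n) (hnode : ∀ i : Fin n, P.eval (x i.castSucc) = y i.castSucc) :
    (of fun i j : Fin (n + 1) ↦ if j = Fin.last n then y i else x i ^ (j : ℕ)).det =
      (y (Fin.last n) - P.eval (x (Fin.last n))) * (vandermonde fun i ↦ x i.castSucc).det := by
  set A : Matrix (Fin (n + 1)) (Fin (n + 1)) R :=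
    of fun i j ↦ if j = Fin.last n then y i - P.eval (x i) else x i ^ (j : ℕ)
  set c : Fin (n + 1) → R := fun i ↦ if i = Fin.last n then 0 else P.coeff i
  have hsum : ∀ k, ∑ i, c i • A k i = P.eval (x k) := by
    intro k
    rw [eval_eq_sum_degreeLTEquiv (mem_degreeLT.2 hP), Fin.sum_univ_castSucc]
    simp [A, c, (Fin.castSucc_lt_last _).ne, degreeLTEquiv]
  have hcol : (of fun i j : Fin (n + 1) ↦ if j = Fin.last n then y i else x i ^ (j : ℕ)) =
      A.updateCol (Fin.last n) fun k ↦ A k (Fin.last n) + ∑ i, c i • A k i := by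
    ext i j
    by_cases hj : j = Fin.last n
    · subst hj
      rw [updateCol_self, hsum]
      simp [A]
    · simp [A, hj]
  rw [hcol, det_updateCol_self_add_sum_smul A (Fin.last n) c (if_pos rfl),
    det_eq_mul_det_submatrix_castSucc A (by simp [A, hnode])]
  congr 1
  · simp [A]
  · congr 1
    ext i j
    simp [A, (Fin.castSucc_lt_last j).ne, vandermonde_apply]

theorem det_vandermonde_pos {S : Type*} [CommRing S] [LinearOrder S] [IsStrictOrderedRing S]
    {n : ℕ} {v : Fin n → S} (hv : StrictMono v) : 0 < (vandermonde v).det := by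
  rw [det_vandermonde]
  exact Finset.prod_pos fun i _ ↦ Finset.prod_pos fun j hj ↦ sub_pos.2 (hv (Finset.mem_Ioi.1 hj))

end Matrix

theorem Real.sign_mul_of_pos_right (a : ℝ) {b : ℝ} (hb : 0 < b) :
    Real.sign (a * b) = Real.sign a := by
  rcases lt_trichotomy a 0 with ha | rfl | ha
  · rw [sign_of_neg ha, sign_of_neg (mul_neg_of_neg_of_pos ha hb)]
  · rw [zero_mul]
  · rw [sign_of_pos ha, sign_of_pos (mul_pos ha hb)]

theorem sign_lagrange_defect_eq_sign_det_general (k : ℕ)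
    (p : Fin (k + 2) → ℝ × ℝ)
    (hp : StrictMono fun i : Fin (k + 1) => (p i.castSucc).1)
    (f : ℝ × ℝ → Fin (k + 2) → ℝ)
    (hf : ∀ q : ℝ × ℝ, ∀ j : Fin (k + 2),
      f q j = if (j : ℕ) = k + 1 then q.2 else q.1 ^ (j : ℕ))
    (L : Polynomial ℝ)
    (hL : L = Lagrange.interpolate (Finset.univ : Finset (Fin (k + 1)))
        (fun i => (p i.castSucc).1) (fun i => (p i.castSucc).2)) :
    Real.sign ((p (Fin.last (k + 1))).2 - L.eval ((p (Fin.last (k + 1))).1)) =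
      Real.sign (Matrix.det (Matrix.of fun i => f (p i))) := by
  have hinj : Set.InjOn (fun i : Fin (k + 1) => (p i.castSucc).1)
      (Finset.univ : Finset (Fin (k + 1))) := hp.injective.injOn
  have hrows : (Matrix.of fun i => f (p i)) = Matrix.of fun i j : Fin (k + 2) =>
      if j = Fin.last (k + 1) then (p i).2 else (p i).1 ^ (j : ℕ) := by
    ext i j
    simp [hf, Fin.ext_iff]
  have hdeg : L.degree < ↑(k + 1) := by
    simpa [hL] using Lagrange.degree_interpolate_lt _ hinj
  have hnode : ∀ i : Fin (k + 1), L.eval (p i.castSucc).1 = (p i.castSucc).2 := fun i ↦ by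
    rw [hL]
    exact Lagrange.eval_interpolate_at_node _ hinj (Finset.mem_univ i)
  rw [hrows, Matrix.det_vandermonde_augmented (fun i => (p i).1) (fun i => (p i).2) L hdeg hnode,
    Real.sign_mul_of_pos_right _ (Matrix.det_vandermonde_pos hp)]

/-- For points `p₁,…,p_{k+2}` in `ℝ²` with `x₁ < … < x_{k+1}` (`x_{k+2}` arbitrary), letting `L`
be the Lagrange interpolation polynomial of the first `k+1` points and
`f(x,y) = (1, x, …, x^k, y)`, we have
`sign(y_{k+2} − L(x_{k+2})) = sign(det(f(p₁),…,f(p_{k+2})))`. -/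
theorem sign_lagrange_defect_eq_sign_det (k : ℕ) (hk : 1 ≤ k)
    (p : Fin (k + 2) → ℝ × ℝ)
    (hp : StrictMono fun i : Fin (k + 1) => (p i.castSucc).1)
    (f : ℝ × ℝ → Fin (k + 2) → ℝ)
    (hf : ∀ q : ℝ × ℝ, ∀ j : Fin (k + 2),
      f q j = if (j : ℕ) = k + 1 then q.2 else q.1 ^ (j : ℕ))
    (L : Polynomial ℝ)
    (hL : L = Lagrange.interpolate (Finset.univ : Finset (Fin (k + 1)))
        (fun i => (p i.castSucc).1) (fun i => (p i.castSucc).2)) :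
    Real.sign ((p (Fin.last (k + 1))).2 - L.eval ((p (Fin.last (k + 1))).1)) =
      Real.sign (Matrix.det (Matrix.of fun i => f (p i))) :=
  sign_lagrange_defect_eq_sign_det_general k p hp f hf L hL
end

section
/- Fix an integer k ≥ 1. Let x_1 < x_2 < … < x_{k+2} be reals and y_1, …, y_{k+2} ∈ ℝ. Let L₁ be the Lagrange interpolation polynomial of (x_i, y_i) for i = 1, …, k+1, and let L₂ be the Lagrange interpolation polynomial of (x_i, y_i) for i = 2, …, k+2. If y_{k+2} > L₁(x_{k+2}), then L₂(x) > L₁(x) for every real x > x_{k+1}. -/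
/-!
`L₂ - L₁` has degree at most `k` and vanishes at the `k` shared nodes `x₂, …, x_{k+1}`, so it is
`c · ∏ (X - xᵢ)` over those nodes. The product is positive to the right of `x_{k+1}`, and at
`x_{k+2}` the difference equals `y_{k+2} - L₁(x_{k+2}) > 0`; hence `c > 0`, and the difference
is positive everywhere to the right of `x_{k+1}`.
-/

open Polynomial Lagrange Finset

theorem eq_C_mul_nodal_of_degree_le_of_eval_eq_zero {F ι : Type*} [Field F] {s : Finset ι}
    {v : ι → F} {p : F[X]} (hvs : Set.InjOn v s) (hdeg : p.degree ≤ #s)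
    (hzero : ∀ i ∈ s, p.eval (v i) = 0) :
    p = C (p.coeff #s) * nodal s v := by
  refine eq_of_degree_sub_lt_of_eval_index_eq s hvs ?_ fun i hi => ?_
  · have hnodal : (nodal s v).natDegree = #s := natDegree_nodal
    rw [degree_lt_iff_coeff_zero]
    intro m hm
    rw [coeff_sub, coeff_C_mul]
    rcases hm.eq_or_lt with rfl | hlt
    · rw [← hnodal, (nodal_monic (s := s) (v := v)).coeff_natDegree, hnodal, mul_one, sub_self]
    · have hp : p.degree < m := hdeg.trans_lt (by exact_mod_cast hlt)
      rw [coeff_eq_zero_of_degree_lt hp,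
        coeff_eq_zero_of_natDegree_lt (p := nodal s v) (hnodal ▸ hlt), mul_zero, sub_zero]
  · rw [hzero i hi, eval_mul, eval_nodal_at_node hi, mul_zero]

theorem eval_nodal_pos {R ι : Type*} [CommRing R] [PartialOrder R] [IsStrictOrderedRing R]
    {s : Finset ι} {v : ι → R} {t : R} (ht : ∀ i ∈ s, v i < t) : 0 < (nodal s v).eval t := by
  rw [eval_nodal]
  exact prod_pos fun i hi => sub_pos.mpr (ht i hi)

theorem eval_pos_of_eval_pos_of_degree_le_of_eval_eq_zero {F ι : Type*} [Field F] [LinearOrder F]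
    [IsStrictOrderedRing F] {s : Finset ι} {v : ι → F} {p : F[X]} (hvs : Set.InjOn v s)
    (hdeg : p.degree ≤ #s) (hzero : ∀ i ∈ s, p.eval (v i) = 0) {a t : F}
    (ha : ∀ i ∈ s, v i < a) (ht : ∀ i ∈ s, v i < t) (hpa : 0 < p.eval a) : 0 < p.eval t := by
  have hp := eq_C_mul_nodal_of_degree_le_of_eval_eq_zero hvs hdeg hzero
  rw [hp, eval_mul, eval_C] at hpa ⊢
  have hc : 0 < p.coeff #s := pos_of_mul_pos_left hpa (eval_nodal_pos ha).le
  exact mul_pos hc (eval_nodal_pos ht)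

theorem degree_interpolate_sub_interpolate_le {F ι κ : Type*} [Field F] [DecidableEq ι]
    [DecidableEq κ] {s : Finset ι} {s' : Finset κ} {v r : ι → F} {v' r' : κ → F} {n : ℕ}
    (hvs : Set.InjOn v s) (hvs' : Set.InjOn v' s') (hs : #s = n + 1) (hs' : #s' = n + 1) :
    (interpolate s' v' r' - interpolate s v r).degree ≤ n := by
  have h := degree_interpolate_lt r hvs
  have h' := degree_interpolate_lt r' hvs'
  rw [hs] at h
  rw [hs'] at h'
  exact Order.le_of_lt_succ ((degree_sub_le _ _).trans_lt (max_lt h' h))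

/-- For reals `x₁ < … < x_{k+2}` and `y₁,…,y_{k+2}`, with `L₁` the Lagrange interpolation
polynomial of the first `k+1` data points and `L₂` that of the last `k+1` data points:
if `y_{k+2} > L₁(x_{k+2})` then `L₂(t) > L₁(t)` for all `t > x_{k+1}`. -/
theorem lagrange_shift_above (k : ℕ)
    (x y : Fin (k + 2) → ℝ) (hx : StrictMono x)
    (L₁ L₂ : Polynomial ℝ)
    (hL₁ : L₁ = Lagrange.interpolate (Finset.univ : Finset (Fin (k + 1)))
        (fun i => x i.castSucc) (fun i => y i.castSucc))
    (hL₂ : L₂ = Lagrange.interpolate (Finset.univ : Finset (Fin (k + 1)))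
        (fun i => x i.succ) (fun i => y i.succ))
    (hy : y (Fin.last (k + 1)) > L₁.eval (x (Fin.last (k + 1)))) :
    ∀ t : ℝ, x ⟨k, by omega⟩ < t → L₂.eval t > L₁.eval t := by
  intro t ht
  have hinj₁ : Set.InjOn (fun i : Fin (k + 1) => x i.castSucc) ↑(univ : Finset (Fin (k + 1))) :=
    (hx.injective.comp (Fin.castSucc_injective _)).injOn
  have hinj₂ : Set.InjOn (fun i : Fin (k + 1) => x i.succ) ↑(univ : Finset (Fin (k + 1))) :=
    (hx.injective.comp (Fin.succ_injective _)).injOn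
  -- `x₂, …, x_{k+1}`, the nodes shared by both interpolation problems
  let w : Fin k → ℝ := fun j => x j.succ.castSucc
  have hw : Set.InjOn w ↑(univ : Finset (Fin k)) :=
    (hx.injective.comp ((Fin.castSucc_injective _).comp (Fin.succ_injective _))).injOn
  have hdeg : (L₂ - L₁).degree ≤ #(univ : Finset (Fin k)) := by
    rw [hL₁, hL₂, card_fin]
    exact degree_interpolate_sub_interpolate_le hinj₁ hinj₂ (card_fin _) (card_fin _)
  have hzero : ∀ j ∈ univ, (L₂ - L₁).eval (w j) = 0 := fun j _ => by
    rw [eval_sub, sub_eq_zero, hL₁, hL₂]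
    have h₁ := eval_interpolate_at_node (fun i => y i.castSucc) hinj₁ (mem_univ j.succ)
    have h₂ := eval_interpolate_at_node (fun i => y i.succ) hinj₂ (mem_univ j.castSucc)
    rw [Fin.succ_castSucc] at h₂
    exact h₂.trans h₁.symm
  have hlast : 0 < (L₂ - L₁).eval (x (Fin.last (k + 1))) := by
    rw [eval_sub, sub_pos, hL₂]
    exact hy.trans_eq
      (eval_interpolate_at_node (fun i => y i.succ) hinj₂ (mem_univ (Fin.last k))).symm
  have hw_le : ∀ j ∈ univ, w j ≤ x ⟨k, by omega⟩ := fun j _ =>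
    hx.monotone (Fin.le_def.mpr j.isLt)
  have hk_lt : x ⟨k, by omega⟩ < x (Fin.last (k + 1)) := hx (Fin.lt_def.mpr k.lt_succ_self)
  have hpos := eval_pos_of_eval_pos_of_degree_le_of_eval_eq_zero hw hdeg hzero
    (fun j hj => (hw_le j hj).trans_lt hk_lt) (fun j hj => (hw_le j hj).trans_lt ht) hlast
  rwa [eval_sub, sub_pos] at hpos
end

section
/- Fix an integer k ≥ 1. Let x_1 < x_2 < … < x_{k+2} be reals and y_1, …, y_{k+2} ∈ ℝ. Let L_A be the Lagrange interpolation polynomial of (x_i, y_i) for i = 1, …, k+1, and for a fixed i₀ ∈ {1, …, k+1}, let L_B be the Lagrange interpolation polynomial of (x_i, y_i) for i ∈ {1, …, k+2} \ {i₀}. Then sign(y_{k+2} − L_A(x_{k+2})) = (−1)^{k−i₀} · sign(y_{i₀} − L_B(x_{i₀})). -/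
/-!
Let `c` be the coefficient of `X ^ (k+1)` in the interpolant `L` of all `k + 2` points. Dropping a
node `i`, the polynomial `L - c • ∏_{j ≠ i} (X - x_j)` has degree `≤ k` and interpolates the
remaining points, so the defect at `x_i` is `c · ∏_{j ≠ i} (x_i - x_j)`. For increasing nodes this
product has sign `(-1) ^ #{j > i}`, so both defects have the sign of `c` up to powers of `-1`
whose exponents have the same parity.
-/

open Polynomial Finset

namespace Polynomial

variable {R : Type*} [Ring R]

theorem degree_sub_C_coeff_mul_monic_lt {p q : R[X]} {n : ℕ} (hp : p.degree < ↑(n + 1))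
    (hq : q.Monic) (hqn : q.natDegree = n) : (p - C (p.coeff n) * q).degree < n := by
  rw [degree_lt_iff_coeff_zero]
  intro m hm
  rcases (show n ≤ m by exact_mod_cast hm).eq_or_lt with rfl | hlt
  · rw [coeff_sub, coeff_C_mul, ← hqn, hq.coeff_natDegree, mul_one, sub_self]
  · have hpm : p.coeff m = 0 := coeff_eq_zero_of_degree_lt (hp.trans_le (by exact_mod_cast hlt))
    rw [coeff_sub, coeff_C_mul, hpm, coeff_eq_zero_of_natDegree_lt (p := q) (by omega),
      mul_zero, sub_zero]

end Polynomial

namespace Lagrange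

variable {F ι : Type*} [Field F] [DecidableEq ι] {s : Finset ι} {v : ι → F} {i : ι}

theorem interpolate_erase_eq_sub (r : ι → F) (hvs : Set.InjOn v s) (hi : i ∈ s) :
    interpolate (s.erase i) v r =
      interpolate s v r - C ((interpolate s v r).coeff (#s - 1)) * nodal (s.erase i) v := by
  have hcard : #(s.erase i) = #s - 1 := card_erase_of_mem hi
  have hpos : #s - 1 + 1 = #s := Nat.sub_add_cancel (card_pos.mpr ⟨i, hi⟩)
  symm
  refine eq_interpolate_of_eval_eq r (hvs.mono (erase_subset i s)) ?_ fun j hj => ?_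
  · rw [hcard]
    refine degree_sub_C_coeff_mul_monic_lt ?_ nodal_monic (by rw [natDegree_nodal, hcard])
    rw [hpos]
    exact degree_interpolate_lt r hvs
  · rw [eval_sub, eval_mul, eval_nodal_at_node hj, mul_zero, sub_zero,
      eval_interpolate_at_node r hvs (mem_of_mem_erase hj)]

theorem sub_eval_interpolate_erase (r : ι → F) (hvs : Set.InjOn v s) (hi : i ∈ s) :
    r i - eval (v i) (interpolate (s.erase i) v r) =
      (interpolate s v r).coeff (#s - 1) * eval (v i) (nodal (s.erase i) v) := by
  rw [interpolate_erase_eq_sub r hvs hi, eval_sub, eval_mul, eval_C,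
    eval_interpolate_at_node r hvs hi, sub_sub_cancel]

end Lagrange

namespace Real

theorem sign_eq_coe_sign (r : ℝ) : Real.sign r = (SignType.sign r : ℝ) := by
  rcases lt_trichotomy r 0 with h | rfl | h
  · rw [sign_of_neg h, _root_.sign_neg h, SignType.coe_neg_one]
  · rw [sign_zero, _root_.sign_zero, SignType.coe_zero]
  · rw [sign_of_pos h, _root_.sign_pos h, SignType.coe_one]

theorem sign_mul (a b : ℝ) : Real.sign (a * b) = Real.sign a * Real.sign b := by
  simp only [sign_eq_coe_sign, _root_.sign_mul, SignType.coe_mul]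

theorem sign_prod {ι : Type*} (s : Finset ι) (f : ι → ℝ) :
    Real.sign (∏ j ∈ s, f j) = ∏ j ∈ s, Real.sign (f j) := by
  simp only [sign_eq_coe_sign]
  exact map_prod ((SignType.castHom (α := ℝ)).comp signHom) f s

end Real

theorem Lagrange.sign_eval_nodal_erase {ι : Type*} [Fintype ι] [LinearOrder ι]
    [LocallyFiniteOrderTop ι] {x : ι → ℝ} (hx : StrictMono x) (i : ι) :
    Real.sign (eval (x i) (nodal (univ.erase i) x)) = (-1) ^ #(Ioi i) := by
  rw [eval_nodal, Real.sign_prod, ← prod_const, eq_comm]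
  refine prod_subset_one_on_sdiff (fun j hj => mem_erase.2 ⟨(mem_Ioi.1 hj).ne', mem_univ j⟩)
    (fun j hj => ?_) (fun j hj => (Real.sign_of_neg (sub_neg.2 (hx (mem_Ioi.1 hj)))).symm)
  obtain ⟨hji, hj⟩ := mem_sdiff.1 hj
  have hlt : j < i := lt_of_le_of_ne (not_lt.1 (mt mem_Ioi.2 hj)) (ne_of_mem_erase hji)
  exact Real.sign_of_pos (sub_pos.2 (hx hlt))

theorem sign_defect_omit_general (k : ℕ)
    (x y : Fin (k + 2) → ℝ) (hx : StrictMono x)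
    (i0 : Fin (k + 1))
    (LA LB : Polynomial ℝ)
    (hLA : LA = Lagrange.interpolate
        ((Finset.univ : Finset (Fin (k + 2))).erase (Fin.last (k + 1))) x y)
    (hLB : LB = Lagrange.interpolate
        ((Finset.univ : Finset (Fin (k + 2))).erase i0.castSucc) x y) :
    Real.sign (y (Fin.last (k + 1)) - LA.eval (x (Fin.last (k + 1)))) =
      (-1 : ℝ) ^ ((k : ℤ) - ((i0 : ℕ) + 1)) *
        Real.sign (y i0.castSucc - LB.eval (x i0.castSucc)) := by
  have hdefect := fun i => Lagrange.sub_eval_interpolate_erase y hx.injective.injOn (mem_univ i)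
  rw [hLA, hLB, hdefect, hdefect, Real.sign_mul, Real.sign_mul,
    Lagrange.sign_eval_nodal_erase hx, Lagrange.sign_eval_nodal_erase hx, Fin.card_Ioi,
    Fin.card_Ioi, Fin.val_last, Fin.val_castSucc, show k + 1 + 1 - 1 - (k + 1) = 0 by omega]
  set ε : ℝ := (-1) ^ ((k : ℤ) - ((i0 : ℕ) + 1))
  have hparity : (-1 : ℝ) ^ (k + 2 - 1 - (i0 : ℕ)) = ε := by
    rw [← zpow_natCast, show ((k + 2 - 1 - (i0 : ℕ) : ℕ) : ℤ) = (k : ℤ) - ((i0 : ℕ) + 1) + 2 by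
      omega, zpow_add₀ (by norm_num), zpow_two, neg_one_mul, neg_neg, mul_one]
  have hε : ε * ε = 1 := by rw [← mul_zpow]; norm_num
  rw [hparity, pow_zero, mul_one, mul_left_comm, hε, mul_one]

/-- For reals `x₁ < … < x_{k+2}` and `y₁,…,y_{k+2}`, let `L_A` be the Lagrange interpolation
polynomial of the data points with indices `1,…,k+1`, and for `i₀ ∈ {1,…,k+1}` let `L_B` be that
of the data points with indices `{1,…,k+2} \ {i₀}`.  Then
`sign(y_{k+2} − L_A(x_{k+2})) = (−1)^{k−i₀} · sign(y_{i₀} − L_B(x_{i₀}))`.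
Here `i₀` is encoded as `i0 : Fin (k+1)`, whose 1-based value is `(i0 : ℕ) + 1`. -/
theorem sign_defect_omit (k : ℕ) (hk : 1 ≤ k)
    (x y : Fin (k + 2) → ℝ) (hx : StrictMono x)
    (i0 : Fin (k + 1))
    (LA LB : Polynomial ℝ)
    (hLA : LA = Lagrange.interpolate
        ((Finset.univ : Finset (Fin (k + 2))).erase (Fin.last (k + 1))) x y)
    (hLB : LB = Lagrange.interpolate
        ((Finset.univ : Finset (Fin (k + 2))).erase i0.castSucc) x y) :
    Real.sign (y (Fin.last (k + 1)) - LA.eval (x (Fin.last (k + 1)))) =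
      (-1 : ℝ) ^ ((k : ℤ) - ((i0 : ℕ) + 1)) *
        Real.sign (y i0.castSucc - LB.eval (x i0.castSucc)) :=
  sign_defect_omit_general k x y hx i0 LA LB hLA hLB
end

section
/- Fix an integer k ≥ 1. Let p_1, …, p_{k+3} be points in ℝ² with coordinates p_i = (x_i, y_i) and x_1 < x_2 < … < x_{k+3}, and let f : ℝ² → ℝ^{k+2} be the map f(x, y) = (1, x, x², …, x^k, y). For j = 1, …, k+3, let D_j denote the determinant of the (k+2)×(k+2) matrix whose rows are f(p_i) for i ∈ {1, …, k+3} \ {j}, listed in increasing order of i. If sign(D_{k+3}) = sign(D_1), then sign(D_j) = sign(D_1) for every j = 1, …, k+3. -/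
/-!
By Cramer's rule `D_j` is the Vandermonde determinant of the nodes `x_i`, `i ≠ j` (positive,
as the nodes increase) times the divided difference `y[x_i : i ≠ j]`, the leading coefficient of
the polynomial of degree `≤ k + 1` interpolating the points `p_i`, `i ≠ j`. As linear functionals
of `y`, the divided differences over the nodes with one node omitted satisfy
`(x_b - x_a) y[≠j] = (x_b - x_j) y[≠a] + (x_j - x_a) y[≠b]`: both sides vanish on `1, x, …, x^k`
and agree on `x^(k+1)` and `x^(k+2)`, and these monomials span all data vectors. For `a = 1` and
`b = k + 3` this exhibits `y[≠j]` as a convex combination of `y[≠1]` and `y[≠k+3]`.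
-/

open Matrix Polynomial Finset

theorem Matrix.vandermonde_mulVec_coeff {R : Type*} [CommRing R] {m : ℕ} (z : Fin m → R)
    {P : R[X]} (hP : P.natDegree < m) :
    vandermonde z *ᵥ (fun c => P.coeff c) = fun i => P.eval (z i) := by
  funext i
  rw [eval_eq_sum_range' hP, ← Fin.sum_univ_eq_sum_range]
  simp only [mulVec, dotProduct, vandermonde_apply, mul_comm]

theorem Matrix.det_vandermonde_pos_s9 {K : Type*} [Field K] [LinearOrder K] [IsStrictOrderedRing K]
    {m : ℕ} {z : Fin m → K} (hz : StrictMono z) : 0 < (vandermonde z).det := by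
  rw [det_vandermonde]
  exact prod_pos fun i _ => prod_pos fun j hj => sub_pos.mpr (hz (mem_Ioi.mp hj))

section Field

variable {K : Type*} [Field K] {n : ℕ}

theorem linearMap_ext_of_apply_pow {M : Type*} [AddCommGroup M] [Module K M] {m : ℕ}
    {x : Fin m → K} (hx : Function.Injective x) {f g : (Fin m → K) →ₗ[K] M}
    (h : ∀ c : Fin m, f (fun i => x i ^ (c : ℕ)) = g (fun i => x i ^ (c : ℕ))) : f = g := by
  have hli := linearIndependent_cols_of_det_ne_zero (det_vandermonde_ne_zero_iff.mpr hx)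
  refine LinearMap.ext_on_range (hli.span_eq_top_of_card_eq_finrank' ?_) h
  simp

/-- The divided difference `y[z_0, …, z_n]`: the coefficient of `X ^ n` in the polynomial of
degree `≤ n` taking the values `y` at the nodes `z`. -/
noncomputable def divDiff (z : Fin (n + 1) → K) : (Fin (n + 1) → K) →ₗ[K] K :=
  LinearMap.proj (Fin.last n) ∘ₗ (vandermonde z)⁻¹.mulVecLin

variable {z : Fin (n + 1) → K}

theorem divDiff_eval (hz : Function.Injective z) {P : K[X]} (hP : P.natDegree ≤ n) :
    divDiff z (fun i => P.eval (z i)) = P.coeff n := by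
  have hV : IsUnit (vandermonde z).det := (det_vandermonde_ne_zero_iff.mpr hz).isUnit
  rw [divDiff, LinearMap.comp_apply, mulVecLin_apply,
    ← vandermonde_mulVec_coeff z (Nat.lt_succ_of_le hP), mulVec_mulVec, nonsing_inv_mul _ hV,
    one_mulVec]
  rfl

theorem divDiff_pow_of_le (hz : Function.Injective z) {c : ℕ} (hc : c ≤ n) :
    divDiff z (fun i => z i ^ c) = if n = c then 1 else 0 := by
  simpa using divDiff_eval hz (P := X ^ c) (by simpa using hc)

theorem divDiff_pow_succ (hz : Function.Injective z) :
    divDiff z (fun i => z i ^ (n + 1)) = ∑ i, z i := by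
  set P : K[X] := ∏ i, (X - C (z i))
  have hP : IsMonicOfDegree P (n + 1) :=
    ⟨by simp [P, natDegree_prod_of_monic _ _ fun i _ => monic_X_sub_C (z i)],
      monic_prod_X_sub_C z univ⟩
  have hdeg : (X ^ (n + 1) - P).natDegree ≤ n :=
    Nat.le_of_lt_succ ((isMonicOfDegree_X_pow K (n + 1)).natDegree_sub_lt n.succ_ne_zero hP)
  have hcoeff : (X ^ (n + 1) - P).coeff n = ∑ i, z i := by
    have := prod_X_sub_C_coeff_card_pred (univ : Finset (Fin (n + 1))) z (by simp)
    simp_all [P]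
  have heval : (fun i => z i ^ (n + 1)) = fun i => (X ^ (n + 1) - P).eval (z i) := by
    funext i
    simp [P, eval_prod, prod_eq_zero (mem_univ i)]
  rw [heval, divDiff_eval hz hdeg, hcoeff]

theorem Matrix.det_updateCol_last_vandermonde (hz : Function.Injective z) (y : Fin (n + 1) → K) :
    ((vandermonde z).updateCol (Fin.last n) y).det = (vandermonde z).det * divDiff z y := by
  have hV : (vandermonde z).det ≠ 0 := det_vandermonde_ne_zero_iff.mpr hz
  rw [← cramer_apply, cramer_eq_adjugate_mulVec, divDiff, LinearMap.comp_apply, mulVecLin_apply,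
    Matrix.inv_def, smul_mulVec, LinearMap.proj_apply, Pi.smul_apply, smul_eq_mul,
    Ring.inverse_eq_inv', mul_inv_cancel_left₀ hV]

theorem divDiff_succAbove_linear_relation {x : Fin (n + 2) → K} (hx : Function.Injective x)
    (a b j : Fin (n + 2)) (y : Fin (n + 2) → K) :
    (x b - x a) * divDiff (x ∘ j.succAbove) (y ∘ j.succAbove) =
      (x b - x j) * divDiff (x ∘ a.succAbove) (y ∘ a.succAbove) +
        (x j - x a) * divDiff (x ∘ b.succAbove) (y ∘ b.succAbove) := by
  let δ (i : Fin (n + 2)) := divDiff (x ∘ i.succAbove) ∘ₗ LinearMap.funLeft K K i.succAbove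
  have hinj (i : Fin (n + 2)) : Function.Injective (x ∘ i.succAbove) :=
    hx.comp Fin.succAbove_right_injective
  suffices (x b - x a) • δ j = (x b - x j) • δ a + (x j - x a) • δ b from
    LinearMap.congr_fun this y
  have hδ (i : Fin (n + 2)) (c : ℕ) :
      δ i (fun t => x t ^ c) = divDiff (x ∘ i.succAbove) (fun t => (x ∘ i.succAbove) t ^ c) :=
    rfl
  refine linearMap_ext_of_apply_pow hx fun c => ?_
  simp only [LinearMap.smul_apply, LinearMap.add_apply, smul_eq_mul, hδ]
  rcases Nat.lt_succ_iff_lt_or_eq.mp c.isLt with hc | hc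
  · simp only [fun i => divDiff_pow_of_le (hinj i) (Nat.lt_succ_iff.mp hc)]
    split_ifs <;> ring
  · have hsum (i : Fin (n + 2)) : ∑ t, (x ∘ i.succAbove) t = ∑ t, x t - x i := by
      rw [Fin.sum_univ_succAbove x i, add_sub_cancel_left]
      rfl
    simp only [hc, fun i => divDiff_pow_succ (hinj i), hsum]
    ring

end Field

theorem Real.sign_mul_of_pos {c r : ℝ} (hc : 0 < c) : Real.sign (c * r) = Real.sign r := by
  rcases lt_trichotomy r 0 with hr | rfl | hr
  · rw [sign_of_neg (mul_neg_of_pos_of_neg hc hr), sign_of_neg hr]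
  · rw [mul_zero]
  · rw [sign_of_pos (mul_pos hc hr), sign_of_pos hr]

theorem Real.sign_eq_of_add_mul_eq {α β u v w : ℝ} (hα : 0 ≤ α) (hβ : 0 ≤ β) (hαβ : 0 < α + β)
    (huv : Real.sign u = Real.sign v) (hw : (α + β) * w = α * u + β * v) :
    Real.sign w = Real.sign u := by
  have comb_neg {u v : ℝ} (hu : u < 0) (hv : v < 0) : α * u + β * v < 0 := by
    rcases hα.eq_or_lt with rfl | hα'
    · nlinarith
    · nlinarith
  rcases lt_trichotomy u 0 with hu | rfl | hu <;> rcases lt_trichotomy v 0 with hv | rfl | hv <;>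
    simp only [sign_of_neg, sign_of_pos, sign_zero, *] at huv ⊢ <;> try norm_num at huv
  · exact sign_of_neg (neg_of_mul_neg_right (hw ▸ comb_neg hu hv) hαβ.le)
  · exact sign_eq_zero_iff.mpr (by simpa [hαβ.ne'] using hw)
  · have := comb_neg (neg_lt_zero.mpr hu) (neg_lt_zero.mpr hv)
    exact sign_of_pos (pos_of_mul_pos_right (by linarith) hαβ.le)

theorem sign_det_transitivity_general (k : ℕ)
    (p : Fin (k + 3) → ℝ × ℝ) (hp : StrictMono fun i => (p i).1)
    (f : ℝ × ℝ → Fin (k + 2) → ℝ)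
    (hf : ∀ q : ℝ × ℝ, ∀ j : Fin (k + 2),
      f q j = if (j : ℕ) = k + 1 then q.2 else q.1 ^ (j : ℕ))
    (D : Fin (k + 3) → ℝ)
    (hD : ∀ j : Fin (k + 3),
      D j = Matrix.det (Matrix.of fun i : Fin (k + 2) => f (p (j.succAbove i))))
    (h : Real.sign (D (Fin.last (k + 2))) = Real.sign (D 0)) :
    ∀ j : Fin (k + 3), Real.sign (D j) = Real.sign (D 0) := by
  set x : Fin (k + 3) → ℝ := fun i => (p i).1
  set y : Fin (k + 3) → ℝ := fun i => (p i).2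
  have hsign (a : Fin (k + 3)) :
      Real.sign (D a) = Real.sign (divDiff (x ∘ a.succAbove) (y ∘ a.succAbove)) := by
    have hmat : (of fun i : Fin (k + 2) => f (p (a.succAbove i))) =
        (vandermonde (x ∘ a.succAbove)).updateCol (Fin.last (k + 1)) (y ∘ a.succAbove) := by
      ext i c
      simp [hf, updateCol_apply, Fin.ext_iff, x, y]
    rw [hD, hmat, det_updateCol_last_vandermonde (hp.injective.comp Fin.succAbove_right_injective),
      Real.sign_mul_of_pos (det_vandermonde_pos_s9 (hp.comp (Fin.strictMono_succAbove a)))]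
  intro j
  simp only [hsign] at h ⊢
  refine Real.sign_eq_of_add_mul_eq (sub_nonneg.mpr (hp.monotone (Fin.le_last j)))
    (sub_nonneg.mpr (hp.monotone (Fin.zero_le j))) ?_ h.symm ?_ <;> rw [sub_add_sub_cancel]
  · exact sub_pos.mpr (hp Fin.last_pos)
  · exact divDiff_succAbove_linear_relation hp.injective 0 (Fin.last _) j y

/-- (Transitivity.)  For points `p₁,…,p_{k+3}` in `ℝ²` with strictly increasing `x`-coordinates
and `f(x,y) = (1, x, …, x^k, y)`, let `D_j` be the determinant of the matrix with rows `f(pᵢ)`,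
`i ≠ j`, in increasing order of `i`.  If `sign(D_{k+3}) = sign(D₁)`, then `sign(D_j) = sign(D₁)`
for every `j`. -/
theorem sign_det_transitivity (k : ℕ) (hk : 1 ≤ k)
    (p : Fin (k + 3) → ℝ × ℝ) (hp : StrictMono fun i => (p i).1)
    (f : ℝ × ℝ → Fin (k + 2) → ℝ)
    (hf : ∀ q : ℝ × ℝ, ∀ j : Fin (k + 2),
      f q j = if (j : ℕ) = k + 1 then q.2 else q.1 ^ (j : ℕ))
    (D : Fin (k + 3) → ℝ)
    (hD : ∀ j : Fin (k + 3),
      D j = Matrix.det (Matrix.of fun i : Fin (k + 2) => f (p (j.succAbove i))))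
    (h : Real.sign (D (Fin.last (k + 2))) = Real.sign (D 0)) :
    ∀ j : Fin (k + 3), Real.sign (D j) = Real.sign (D 0) :=
  sign_det_transitivity_general k p hp f hf D hD h
end
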